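/- arXiv:1208.1875 — 2 statements merged into one kernel-verified Lean document; each statement's English description precedes it below -/
import Mathlib

section
/- Let $0 < \delta < 1$ and let $c$ be a real number with $0 < c < (1+\tan\delta)^{-1/2}$, and set $\eta = (1+\tan\delta)^{-1/2} - c > 0$. Then there exists $\epsilon > 0$ such that for all $w \in \mathbb{C}$ with $0 < |w| < \epsilon$ and $|\arg w| < \delta$, one has $|1 - c w|^2 (1 + \operatorname{Re} w)^2 \ge 1 + \eta |w|$. -/
open Complex Real

/-
Writing `r = Re w`, one has `|1 - c w|² (1 + r)² ≥ ((1 - c r)(1 + r))² ≥ 1 + 2(1 - c) r - 2 c r²`.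
In the sector `|arg w| < δ < π/3` one has `|w| ≤ 2 r`, so `η |w| ≤ 2 η r`, and the gap
`η < 1 - c` (because `tan δ > 0`) absorbs the quadratic term once `|w|` is small.
-/

theorem Complex.norm_mul_cos_le_re_of_abs_arg_le {w : ℂ} {θ : ℝ} (hθ : θ ≤ π)
    (harg : |w.arg| ≤ θ) : ‖w‖ * Real.cos θ ≤ w.re := by
  rw [← Complex.norm_mul_cos_arg, ← Real.cos_abs w.arg]
  exact mul_le_mul_of_nonneg_left
    (Real.cos_le_cos_of_nonneg_of_le_pi (abs_nonneg _) hθ harg) (norm_nonneg w)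

theorem Complex.norm_le_two_mul_re_of_abs_arg_le_pi_div_three {w : ℂ}
    (harg : |w.arg| ≤ π / 3) : ‖w‖ ≤ 2 * w.re := by
  have h := Complex.norm_mul_cos_le_re_of_abs_arg_le (by linarith [Real.pi_pos]) harg
  rw [Real.cos_pi_div_three] at h
  linarith

theorem Complex.sq_one_sub_mul_re_le_sq_norm (c : ℝ) (w : ℂ) :
    (1 - c * w.re) ^ 2 ≤ ‖1 - c * w‖ ^ 2 := by
  rw [Complex.sq_norm, Complex.normSq_apply]
  simp only [sub_re, one_re, re_ofReal_mul, sub_im, one_im, im_ofReal_mul]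
  nlinarith [sq_nonneg (c * w.im)]

theorem one_add_two_mul_le_sq_one_sub_mul_mul_one_add (c r : ℝ) :
    1 + 2 * ((1 - c) * r - c * r ^ 2) ≤ ((1 - c * r) * (1 + r)) ^ 2 := by
  nlinarith [sq_nonneg ((1 - c) * r - c * r ^ 2)]

theorem exists_one_add_mul_norm_le_sq_norm_one_sub_mul_mul_sq_one_add_re
    {c η : ℝ} (hη : 0 ≤ η) (hηc : η < 1 - c) :
    ∃ ε : ℝ, 0 < ε ∧ ∀ w : ℂ, ‖w‖ < ε → ‖w‖ ≤ 2 * w.re →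
      1 + η * ‖w‖ ≤ ‖1 - c * w‖ ^ 2 * (1 + w.re) ^ 2 := by
  refine ⟨(1 - c - η) / (|c| + 1), by apply div_pos <;> positivity [sub_pos.2 hηc], ?_⟩
  intro w hwε hw
  set r := w.re
  have hr : 0 ≤ r := by linarith [norm_nonneg w]
  have hcr : c * r ≤ 1 - c - η := by
    have hrε : (|c| + 1) * r < 1 - c - η := by
      rw [lt_div_iff₀ (by positivity)] at hwε
      nlinarith [mul_le_mul_of_nonneg_left (re_le_norm w) (by positivity : (0 : ℝ) ≤ |c| + 1)]
    nlinarith [le_abs_self c]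
  calc 1 + η * ‖w‖ ≤ 1 + 2 * ((1 - c) * r - c * r ^ 2) := by nlinarith
    _ ≤ ((1 - c * r) * (1 + r)) ^ 2 := one_add_two_mul_le_sq_one_sub_mul_mul_one_add c r
    _ = (1 - c * r) ^ 2 * (1 + r) ^ 2 := mul_pow _ _ _
    _ ≤ ‖1 - c * w‖ ^ 2 * (1 + r) ^ 2 :=
      mul_le_mul_of_nonneg_right (Complex.sq_one_sub_mul_re_le_sq_norm c w) (sq_nonneg _)

theorem stmt12_general (δ c : ℝ) (hδ0 : 0 < δ) (hδ1 : δ < 1)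
    (hc : c < (Real.sqrt (1 + Real.tan δ))⁻¹) :
    ∃ ε : ℝ, 0 < ε ∧ ∀ w : ℂ, 0 < ‖w‖ → ‖w‖ < ε →
      |w.arg| < δ →
      1 + ((Real.sqrt (1 + Real.tan δ))⁻¹ - c) * ‖w‖ ≤
        ‖1 - c * w‖ ^ 2 * (1 + w.re) ^ 2 := by
  have hδπ : δ < π / 3 := by linarith [Real.pi_gt_three]
  have htan : 0 < Real.tan δ := Real.tan_pos_of_pos_of_lt_pi_div_two hδ0 (by linarith)
  have hsqrt : 1 < Real.sqrt (1 + Real.tan δ) := by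
    rw [Real.lt_sqrt zero_le_one]
    linarith
  obtain ⟨ε, hε, hbound⟩ :=
    exists_one_add_mul_norm_le_sq_norm_one_sub_mul_mul_sq_one_add_re (c := c)
      (sub_pos.2 hc).le (by linarith [inv_lt_one_of_one_lt₀ hsqrt])
  exact ⟨ε, hε, fun w _ hwε harg => hbound w hwε
    (Complex.norm_le_two_mul_re_of_abs_arg_le_pi_div_three (by linarith))⟩

/-- Key inequality: for `0 < c < (1+tan δ)^{-1/2}` and `η` the gap, for `w`
small in the sector `|arg w| < δ` one has
`|1-cw|² (1+Re w)² ≥ 1 + η|w|`. -/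
theorem stmt12 (δ c : ℝ) (hδ0 : 0 < δ) (hδ1 : δ < 1) (hc0 : 0 < c)
    (hc : c < (Real.sqrt (1 + Real.tan δ))⁻¹) :
    ∃ ε : ℝ, 0 < ε ∧ ∀ w : ℂ, 0 < ‖w‖ → ‖w‖ < ε →
      |w.arg| < δ →
      1 + ((Real.sqrt (1 + Real.tan δ))⁻¹ - c) * ‖w‖ ≤
        ‖1 - c * w‖ ^ 2 * (1 + w.re) ^ 2 :=
  stmt12_general δ c hδ0 hδ1 hc
end

section
/- Let $f(z) = z - \frac{1}{\nu-1} z^{\nu} + g(z)$ where $\nu \ge 2$ is an integer and $g$ is holomorphic near $0$ with $g(z) = O(z^{\nu+1})$. Then there exist $C, \epsilon > 0$ such that for all $z$ with $0 < |z| < \epsilon$ and $|\arg z| < \pi/(2(\nu-1))$ (so that $f(z) \ne 0$), $\left| \frac{1}{f(z)^{\nu-1}} - \frac{1}{z^{\nu-1}} - 1 \right| \le C |z|$. -/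
/-!
Write `ν = m + 1` and factor `f z = z (1 - u)` with `u = z^m/m - g(z)/z = O(z^m)`. Since
`m u / z^m = 1 - m g(z)/z^{m+1}`,
`1/f(z)^m - 1/z^m - 1 = ((1 - u)^{-m} - 1 - m u)/z^m - m g(z)/z^{m+1}`.
The first term is `O(u²/z^m) = O(z^m)` by the second-order expansion of `(1 - u)^{-m}`, the
second is `O(z)` by the hypothesis on `g`.
-/

open Finset

lemma one_sub_one_add_mul_mul_one_sub_pow (m : ℕ) (u : ℂ) :
    1 - (1 + m * u) * (1 - u) ^ m = u ^ 2 * ∑ k ∈ range m, ((k : ℂ) + 1) * (1 - u) ^ k := by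
  induction m with
  | zero => simp
  | succ n ih =>
    rw [sum_range_succ]
    push_cast
    linear_combination ih

lemma norm_inv_one_sub_pow_sub_one_sub_mul_le (m : ℕ) {u : ℂ} (hu : ‖u‖ ≤ 1 / 2) :
    ‖((1 - u) ^ m)⁻¹ - 1 - m * u‖ ≤ m ^ 2 * 3 ^ m * ‖u‖ ^ 2 := by
  have h1u_ge : 1 / 2 ≤ ‖1 - u‖ := by
    have := norm_sub_norm_le (1 : ℂ) u
    rw [norm_one] at this
    linarith
  have h1u_le : ‖1 - u‖ ≤ 3 / 2 := by
    have := norm_sub_le (1 : ℂ) u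
    rw [norm_one] at this
    linarith
  have h1u_ne : (1 : ℂ) - u ≠ 0 := norm_pos_iff.mp (by linarith)
  have hsum : ‖∑ k ∈ range m, ((k : ℂ) + 1) * (1 - u) ^ k‖ ≤ m ^ 2 * (3 / 2) ^ m := by
    calc ‖∑ k ∈ range m, ((k : ℂ) + 1) * (1 - u) ^ k‖
        ≤ ∑ k ∈ range m, ‖((k : ℂ) + 1) * (1 - u) ^ k‖ := norm_sum_le _ _
      _ ≤ (range m).card • ((m : ℝ) * (3 / 2) ^ m) := by
        refine sum_le_card_nsmul _ _ _ fun k hk => ?_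
        have hkm := mem_range.mp hk
        rw [norm_mul, norm_pow, show (k : ℂ) + 1 = ((k + 1 : ℕ) : ℂ) by push_cast; rfl,
          norm_natCast]
        gcongr
        · exact_mod_cast hkm
        · calc ‖1 - u‖ ^ k ≤ (3 / 2) ^ k := by gcongr
            _ ≤ (3 / 2) ^ m := pow_le_pow_right₀ (by norm_num) hkm.le
      _ = m ^ 2 * (3 / 2) ^ m := by rw [card_range, nsmul_eq_mul]; ring
  have hexpand : ((1 - u) ^ m)⁻¹ - 1 - m * u
      = u ^ 2 * (∑ k ∈ range m, ((k : ℂ) + 1) * (1 - u) ^ k) / (1 - u) ^ m := by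
    rw [← one_sub_one_add_mul_mul_one_sub_pow]
    field_simp
    ring
  rw [hexpand, norm_div, norm_mul, norm_pow, norm_pow, div_le_iff₀ (by positivity)]
  calc ‖u‖ ^ 2 * ‖∑ k ∈ range m, ((k : ℂ) + 1) * (1 - u) ^ k‖
      ≤ ‖u‖ ^ 2 * (m ^ 2 * (3 / 2) ^ m) := by gcongr
    _ = m ^ 2 * 3 ^ m * ‖u‖ ^ 2 * (1 / 2) ^ m := by
      rw [show (3 / 2 : ℝ) = 3 * (1 / 2) by norm_num, mul_pow]; ring
    _ ≤ m ^ 2 * 3 ^ m * ‖u‖ ^ 2 * ‖1 - u‖ ^ m := by gcongr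

lemma sub_pow_div_add_eq_mul {m : ℕ} (hm : m ≠ 0) {z : ℂ} (hz : z ≠ 0) (w : ℂ) :
    z - z ^ (m + 1) / m + w = z * (1 - (z ^ m / m - w / z)) := by
  have hmC : (m : ℂ) ≠ 0 := Nat.cast_ne_zero.mpr hm
  field_simp
  ring

lemma fatou_coordinate_identity {m : ℕ} (hm : m ≠ 0) {z w u : ℂ} (hz : z ≠ 0)
    (hu : u = z ^ m / m - w / z) (h1u : 1 - u ≠ 0) :
    1 / (z - z ^ (m + 1) / m + w) ^ m - 1 / z ^ m - 1
      = (((1 - u) ^ m)⁻¹ - 1 - m * u) / z ^ m - m * w / z ^ (m + 1) := by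
  have hmC : (m : ℂ) ≠ 0 := Nat.cast_ne_zero.mpr hm
  have hmu : m * u * z = z ^ (m + 1) - m * w := by
    rw [hu]
    field_simp
    ring
  rw [sub_pow_div_add_eq_mul hm hz, ← hu, mul_pow]
  field_simp
  linear_combination z ^ m * (1 - u) ^ m * hmu

lemma fatou_coordinate_estimate {m : ℕ} (hm : 1 ≤ m) {C₀ : ℝ} (hC₀ : 0 ≤ C₀) {z w : ℂ}
    (hz : z ≠ 0) (hzC : (1 + C₀) * ‖z‖ ≤ 1 / 2)
    (hw : ‖w‖ ≤ C₀ * ‖z‖ ^ (m + 2)) :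
    z - z ^ (m + 1) / m + w ≠ 0 ∧
      ‖1 / (z - z ^ (m + 1) / m + w) ^ m - 1 / z ^ m - 1‖
        ≤ ((1 + C₀) ^ 2 * m ^ 2 * 3 ^ m + m * C₀) * ‖z‖ := by
  have hm0 : m ≠ 0 := by omega
  have hz0 : 0 < ‖z‖ := norm_pos_iff.mpr hz
  have hz1 : ‖z‖ ≤ 1 := by nlinarith
  have hzm : ‖z‖ ^ m ≤ ‖z‖ := pow_le_of_le_one hz0.le hz1 hm0
  set u := z ^ m / m - w / z with hu
  have hu_le : ‖u‖ ≤ (1 + C₀) * ‖z‖ ^ m := by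
    have hmR : (1 : ℝ) ≤ m := by exact_mod_cast hm
    have h1 : ‖z ^ m / m‖ ≤ ‖z‖ ^ m := by
      rw [norm_div, norm_pow, norm_natCast]
      exact div_le_self (by positivity) hmR
    have h2 : ‖w / z‖ ≤ C₀ * ‖z‖ ^ m := by
      rw [norm_div, div_le_iff₀ hz0]
      calc ‖w‖ ≤ C₀ * ‖z‖ ^ (m + 2) := hw
        _ = C₀ * ‖z‖ ^ (m + 1) * ‖z‖ := by ring
        _ ≤ C₀ * ‖z‖ ^ m * ‖z‖ := by
          gcongr C₀ * ?_ * _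
          exact pow_le_pow_of_le_one hz0.le hz1 m.le_succ
    calc ‖u‖ ≤ ‖z ^ m / m‖ + ‖w / z‖ := norm_sub_le _ _
      _ ≤ (1 + C₀) * ‖z‖ ^ m := by linarith
  have hu_half : ‖u‖ ≤ 1 / 2 := by nlinarith
  have h1u : 1 - u ≠ 0 := by
    intro h
    have := norm_sub_norm_le (1 : ℂ) u
    rw [h, norm_zero, norm_one] at this
    linarith
  refine ⟨sub_pow_div_add_eq_mul hm0 hz w ▸ mul_ne_zero hz h1u, ?_⟩
  have hmain :
      ‖(((1 - u) ^ m)⁻¹ - 1 - m * u) / z ^ m‖ ≤ (1 + C₀) ^ 2 * m ^ 2 * 3 ^ m * ‖z‖ := by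
    rw [norm_div, norm_pow, div_le_iff₀ (by positivity)]
    calc ‖((1 - u) ^ m)⁻¹ - 1 - m * u‖ ≤ m ^ 2 * 3 ^ m * ‖u‖ ^ 2 :=
          norm_inv_one_sub_pow_sub_one_sub_mul_le m hu_half
      _ ≤ m ^ 2 * 3 ^ m * ((1 + C₀) * ‖z‖ ^ m) ^ 2 := by gcongr
      _ = (1 + C₀) ^ 2 * m ^ 2 * 3 ^ m * ‖z‖ ^ m * ‖z‖ ^ m := by ring
      _ ≤ (1 + C₀) ^ 2 * m ^ 2 * 3 ^ m * ‖z‖ * ‖z‖ ^ m := by gcongr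
  have hrem : ‖m * w / z ^ (m + 1)‖ ≤ m * C₀ * ‖z‖ := by
    rw [norm_div, norm_mul, norm_pow, norm_natCast, div_le_iff₀ (by positivity)]
    calc m * ‖w‖ ≤ m * (C₀ * ‖z‖ ^ (m + 2)) := by gcongr
      _ = m * C₀ * ‖z‖ * ‖z‖ ^ (m + 1) := by ring
  rw [fatou_coordinate_identity hm0 hz hu h1u, add_mul]
  exact (norm_sub_le _ _).trans (add_le_add hmain hrem)

theorem stmt15_general (ν : ℕ) (hν : 2 ≤ ν) (g : ℂ → ℂ)
    (hgO : ∃ C₀ r : ℝ, 0 < C₀ ∧ 0 < r ∧ ∀ z : ℂ, ‖z‖ < r →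
      ‖g z‖ ≤ C₀ * ‖z‖ ^ (ν + 1))
    (f : ℂ → ℂ) (hf : ∀ z, f z = z - z ^ ν / ((ν : ℂ) - 1) + g z) :
    ∃ C ε : ℝ, 0 < C ∧ 0 < ε ∧ ∀ z : ℂ, 0 < ‖z‖ →
      ‖z‖ < ε → |z.arg| < Real.pi / (2 * ((ν : ℝ) - 1)) →
      f z ≠ 0 ∧
        ‖1 / f z ^ (ν - 1) - 1 / z ^ (ν - 1) - 1‖ ≤
          C * ‖z‖ := by
  obtain ⟨C₀, r, hC₀, hr, hg⟩ := hgO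
  obtain ⟨m, rfl⟩ : ∃ m, ν = m + 1 := ⟨ν - 1, by omega⟩
  have hm : (0 : ℝ) < m := by exact_mod_cast (by omega : 0 < m)
  refine ⟨(1 + C₀) ^ 2 * m ^ 2 * 3 ^ m + m * C₀, min r (1 / (2 * (1 + C₀))), by positivity,
    by positivity, fun z hz0 hzε _ => ?_⟩
  have hzC : (1 + C₀) * ‖z‖ ≤ 1 / 2 := by
    have := (hzε.trans_le (min_le_right _ _)).le
    rw [le_div_iff₀ (by positivity)] at this
    linarith
  simp only [hf, Nat.cast_succ, add_sub_cancel_right, Nat.add_sub_cancel]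
  exact fatou_coordinate_estimate (by omega) hC₀.le (norm_pos_iff.mp hz0) hzC
    (hg z (hzε.trans_le (min_le_left _ _)))

/-- Fatou coordinate estimate: for `f(z) = z - z^ν/(ν-1) + g(z)` with `g`
holomorphic near `0` and `g(z) = O(z^{ν+1})`, on a sector one has
`|1/f(z)^{ν-1} - 1/z^{ν-1} - 1| ≤ C|z|`. -/
theorem stmt15 (ν : ℕ) (hν : 2 ≤ ν) (g : ℂ → ℂ) (hg : AnalyticAt ℂ g 0)
    (hgO : ∃ C₀ r : ℝ, 0 < C₀ ∧ 0 < r ∧ ∀ z : ℂ, ‖z‖ < r →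
      ‖g z‖ ≤ C₀ * ‖z‖ ^ (ν + 1))
    (f : ℂ → ℂ) (hf : ∀ z, f z = z - z ^ ν / ((ν : ℂ) - 1) + g z) :
    ∃ C ε : ℝ, 0 < C ∧ 0 < ε ∧ ∀ z : ℂ, 0 < ‖z‖ →
      ‖z‖ < ε → |z.arg| < Real.pi / (2 * ((ν : ℝ) - 1)) →
      f z ≠ 0 ∧
        ‖1 / f z ^ (ν - 1) - 1 / z ^ (ν - 1) - 1‖ ≤
          C * ‖z‖ :=
  stmt15_general ν hν g hgO f hf
end
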